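/- Let p_L denote the number of self-avoiding polygons of length L on the hexagonal lattice, counted modulo translation. Then for all L, M one has p_{L+M-2} ≥ p_L · p_M. -/

import Mathlib

/-- The hexagonal (honeycomb) lattice in its "brick wall" representation on `ℤ × ℤ`:
all horizontal edges `(x,y)–(x+1,y)` and the vertical edges `(x,y)–(x,y+1)` with
`x + y` even. -/
def HexLattice : SimpleGraph (ℤ × ℤ) :=
  SimpleGraph.fromRel (fun p q =>
    (p.2 = q.2 ∧ q.1 = p.1 + 1) ∨ (p.1 = q.1 ∧ q.2 = p.2 + 1 ∧ Even (p.1 + p.2)))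

/-- `S` is (the edge set of) a self-avoiding polygon of length `L` on the hexagonal
lattice: the edge set of a cycle with `L` edges. -/
def IsSAP (L : ℕ) (S : Set (Sym2 (ℤ × ℤ))) : Prop :=
  ∃ (v : ℤ × ℤ) (w : HexLattice.Walk v v), w.IsCycle ∧ w.length = L ∧ S = {e | e ∈ w.edges}

/-- Translation of an edge set of the lattice by a lattice vector `t`. -/
def translateEdges (t : ℤ × ℤ) (S : Set (Sym2 (ℤ × ℤ))) : Set (Sym2 (ℤ × ℤ)) :=
  (Sym2.map (fun p => p + t)) '' S

/-- The number `p_L` of self-avoiding polygons of length `L` on the hexagonal lattice,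
counted modulo translation. -/
noncomputable def hexSAPCount (L : ℕ) : ℕ :=
  Nat.card (Quot (fun S S' : {S // IsSAP L S} => ∃ t : ℤ × ℤ, translateEdges t S.1 = S'.1))

/-!
Translate a polygon of length `L` so that the top vertex of its rightmost column is `(0, 1)`, and
a polygon of length `M` so that the bottom vertex of its leftmost column is `(0, 0)`; the
translation vectors have even coordinate sum, so they are lattice automorphisms. Both polygons then
contain the vertical edge from `(0, 0)` to `(0, 1)`, they lie on either side of the column `x = 0`,
and they share only the two endpoints of that edge, so their union minus this edge is a polygon of
length `L + M - 2`. The glued polygon determines the gluing edge (for two gluing edges `c < c'` in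
lexicographic order the left piece at `c'` would have `L + 1` edges), hence the two pieces and their
translation classes.
-/

open SimpleGraph

namespace SimpleGraph.Walk

variable {V : Type*} {G : SimpleGraph V}

theorem IsPath.start_notMem_support_tail {u v : V} {p : G.Walk u v} (hp : p.IsPath) :
    u ∉ p.support.tail := by
  rw [isPath_def, ← cons_tail_support, List.nodup_cons] at hp
  exact hp.1

theorem IsCycle.exists_cons_toSubgraph_eq [DecidableEq V] {v a b : V} {w : G.Walk v v}
    (hw : w.IsCycle) (he : s(a, b) ∈ w.edges) :
    ∃ (h : G.Adj a b) (p : G.Walk b a), (cons h p).IsCycle ∧ (cons h p).length = w.length ∧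
      (cons h p).toSubgraph = w.toSubgraph := by
  have ha : a ∈ w.support := w.fst_mem_support_of_mem_edges he
  have hb : b ∈ (w.rotate a ha).toSubgraph.neighborSet a := by
    rw [toSubgraph_rotate, Subgraph.mem_neighborSet, ← Subgraph.mem_edgeSet,
      mem_edges_toSubgraph]
    exact he
  rw [(hw.rotate ha).neighborSet_toSubgraph_endpoint] at hb
  obtain ⟨c, hc, hsnd, hlen, hsub⟩ : ∃ c : G.Walk a a, c.IsCycle ∧ c.snd = b ∧
      c.length = w.length ∧ c.toSubgraph = w.toSubgraph := by
    rcases hb with hb | hb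
    · exact ⟨_, hw.rotate ha, hb.symm, by simp, by simp⟩
    · exact ⟨_, (hw.rotate ha).reverse, by rw [snd_reverse, hb], by simp, by simp⟩
  subst hsnd
  refine ⟨c.adj_snd hc.not_nil, c.tail, ?_⟩
  rw [c.cons_tail_eq hc.not_nil]
  exact ⟨hc, hlen, hsub⟩

theorem IsCycle.exists_merge [DecidableEq V] {v₁ v₂ a b : V} {w₁ : G.Walk v₁ v₁}
    {w₂ : G.Walk v₂ v₂} (hw₁ : w₁.IsCycle) (hw₂ : w₂.IsCycle) (he₁ : s(a, b) ∈ w₁.edges)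
    (he₂ : s(a, b) ∈ w₂.edges)
    (hV : ∀ y ∈ w₁.support, y ∈ w₂.support → y = a ∨ y = b) :
    ∃ W : G.Walk a a, W.IsCycle ∧ W.length + 2 = w₁.length + w₂.length ∧
      ∀ e, e ∈ W.edges ↔ (e ∈ w₁.edges ∨ e ∈ w₂.edges) ∧ e ≠ s(a, b) := by
  obtain ⟨h₁, p₁, hc₁, hl₁, hs₁⟩ := hw₁.exists_cons_toSubgraph_eq he₁
  obtain ⟨h₂, p₂, hc₂, hl₂, hs₂⟩ := hw₂.exists_cons_toSubgraph_eq (Sym2.eq_swap ▸ he₂)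
  obtain ⟨hp₁, hab₁⟩ := (cons_isCycle_iff p₁ h₁).1 hc₁
  obtain ⟨hp₂, hab₂⟩ := (cons_isCycle_iff p₂ h₂).1 hc₂
  rw [Sym2.eq_swap] at hab₂
  have hedges {x u v : V} {w : G.Walk x x} {h : G.Adj v u} {p : G.Walk u v}
      (hs : (cons h p).toSubgraph = w.toSubgraph) (e : Sym2 V) :
      e ∈ w.edges ↔ e = s(v, u) ∨ e ∈ p.edges := by
    rw [← mem_edges_toSubgraph, ← hs, mem_edges_toSubgraph, edges_cons, List.mem_cons]
  have hsupport {x u v : V} {w : G.Walk x x} {h : G.Adj v u} {p : G.Walk u v}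
      (hs : (cons h p).toSubgraph = w.toSubgraph) {y : V} (hy : y ∈ p.support.tail) :
      y ∈ w.support := by
    rw [← mem_verts_toSubgraph, ← hs, mem_verts_toSubgraph, support_cons]
    exact List.mem_cons_of_mem _ (List.mem_of_mem_tail hy)
  refine ⟨p₂.append p₁, hp₂.isCycle_append hp₁ ?_ ?_, ?_, fun e => ?_⟩
  · intro y hy₂ hy₁
    rcases hV y (hsupport hs₁ hy₁) (hsupport hs₂ hy₂) with rfl | rfl
    · exact hp₂.start_notMem_support_tail hy₂
    · exact hp₁.start_notMem_support_tail hy₁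
  · have := hw₁.three_le_length
    simp only [length_cons] at hl₁
    omega
  · simp only [length_append, length_cons] at hl₁ hl₂ ⊢
    omega
  · rw [edges_append, List.mem_append, hedges hs₁, hedges hs₂, Sym2.eq_swap (a := b)]
    grind

end SimpleGraph.Walk

def vertsOf {V : Type*} (S : Set (Sym2 V)) : Set V := {p | ∃ e ∈ S, p ∈ e}

theorem vertsOf_setOf_mem_edges {V : Type*} {G : SimpleGraph V} {v : V} {w : G.Walk v v}
    (hw : w.IsCycle) : vertsOf {e | e ∈ w.edges} = {p | p ∈ w.support} := by
  ext p
  simp [vertsOf, Walk.mem_support_iff_exists_mem_edges_of_not_nil hw.not_nil]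

namespace HexLattice

theorem adj_iff {p q : ℤ × ℤ} : HexLattice.Adj p q ↔
    (p.2 = q.2 ∧ (q.1 = p.1 + 1 ∨ p.1 = q.1 + 1)) ∨
    (p.1 = q.1 ∧ (q.2 = p.2 + 1 ∧ Even (p.1 + p.2) ∨ p.2 = q.2 + 1 ∧ Even (q.1 + q.2))) := by
  rw [HexLattice, fromRel_adj, ne_eq, Prod.ext_iff]
  constructor
  · rintro ⟨-, h | h⟩ <;> grind
  · intro h
    refine ⟨by omega, ?_⟩
    grind

theorem even_of_adj_vertical {c : ℤ × ℤ} (h : HexLattice.Adj c (c + (0, 1))) :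
    Even (c.1 + c.2) := by
  simp only [adj_iff, Int.even_iff, Prod.fst_add, Prod.snd_add] at h ⊢
  simp at h
  omega

def translateHom (t : ℤ × ℤ) (ht : Even (t.1 + t.2)) : HexLattice →g HexLattice where
  toFun p := p + t
  map_rel' {p q} h := by
    simp only [adj_iff, Int.even_iff, Prod.fst_add, Prod.snd_add] at *
    omega

theorem natAbs_sub_add_natAbs_sub_le_length {u v : ℤ × ℤ} (w : HexLattice.Walk u v) :
    (v.1 - u.1).natAbs + (v.2 - u.2).natAbs ≤ w.length := by
  induction w with
  | nil => simp
  | cons h _ ih =>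
    rw [adj_iff] at h
    simp only [Walk.length_cons]
    omega

end HexLattice

theorem translateEdges_translateEdges (s t : ℤ × ℤ) (S : Set (Sym2 (ℤ × ℤ))) :
    translateEdges t (translateEdges s S) = translateEdges (s + t) S := by
  simp [translateEdges, Set.image_image, Sym2.map_map, add_assoc]

theorem translateEdges_zero (S : Set (Sym2 (ℤ × ℤ))) : translateEdges 0 S = S := by
  simp [translateEdges]

theorem vertsOf_translateEdges (t : ℤ × ℤ) (S : Set (Sym2 (ℤ × ℤ))) :
    vertsOf (translateEdges t S) = (· + t) '' vertsOf S := by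
  ext p
  simp only [vertsOf, translateEdges, Set.mem_image]
  constructor
  · rintro ⟨_, ⟨e, he, rfl⟩, hp⟩
    obtain ⟨q, hq, rfl⟩ := Sym2.mem_map.1 hp
    exact ⟨q, ⟨e, he, hq⟩, rfl⟩
  · rintro ⟨q, ⟨e, he, hq⟩, rfl⟩
    exact ⟨_, ⟨e, he, rfl⟩, Sym2.mem_map.2 ⟨q, hq, rfl⟩⟩

def lexVerts (S : Set (Sym2 (ℤ × ℤ))) : Set (ℤ ×ₗ ℤ) := toLex '' vertsOf S

theorem lexVerts_translateEdges (t : ℤ × ℤ) (S : Set (Sym2 (ℤ × ℤ))) :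
    lexVerts (translateEdges t S) = (· + toLex t) '' lexVerts S := by
  rw [lexVerts, lexVerts, vertsOf_translateEdges, Set.image_image, Set.image_image]
  rfl

theorem isLeast_lexVerts_translateEdges {S : Set (Sym2 (ℤ × ℤ))} {c : ℤ × ℤ}
    (hc : IsLeast (lexVerts S) (toLex c)) (t : ℤ × ℤ) :
    IsLeast (lexVerts (translateEdges t S)) (toLex (c + t)) := by
  rw [lexVerts_translateEdges]
  exact (add_left_mono (a := toLex t)).map_isLeast hc

theorem isGreatest_lexVerts_translateEdges {S : Set (Sym2 (ℤ × ℤ))} {a : ℤ × ℤ}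
    (ha : IsGreatest (lexVerts S) (toLex a)) (t : ℤ × ℤ) :
    IsGreatest (lexVerts (translateEdges t S)) (toLex (a + t)) := by
  rw [lexVerts_translateEdges]
  exact (add_left_mono (a := toLex t)).map_isGreatest ha

namespace IsSAP

variable {L : ℕ} {S : Set (Sym2 (ℤ × ℤ))}

theorem finite (h : IsSAP L S) : S.Finite := by
  obtain ⟨v, w, -, -, rfl⟩ := h
  exact w.edges.finite_toSet

theorem ncard_eq (h : IsSAP L S) : S.ncard = L := by
  obtain ⟨v, w, hw, rfl, rfl⟩ := h
  rw [← w.length_edges, ← List.toFinset_card_of_nodup hw.edges_nodup, ← Set.ncard_coe_finset,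
    List.coe_toFinset]

theorem subset_edgeSet (h : IsSAP L S) : S ⊆ HexLattice.edgeSet := by
  obtain ⟨v, w, -, -, rfl⟩ := h
  exact fun _ he => w.edges_subset_edgeSet he

theorem finite_lexVerts (h : IsSAP L S) : (lexVerts S).Finite := by
  obtain ⟨v, w, hw, -, rfl⟩ := h
  rw [lexVerts, vertsOf_setOf_mem_edges hw]
  exact w.support.finite_toSet.image _

theorem nonempty_lexVerts (h : IsSAP L S) : (lexVerts S).Nonempty := by
  obtain ⟨v, w, hw, -, rfl⟩ := h
  rw [lexVerts, vertsOf_setOf_mem_edges hw]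
  exact ⟨_, v, w.start_mem_support, rfl⟩

theorem ncard_neighbors_eq_two {p : ℤ × ℤ} (h : IsSAP L S) (hp : p ∈ vertsOf S) :
    {q | s(p, q) ∈ S}.ncard = 2 := by
  obtain ⟨v, w, hw, -, rfl⟩ := h
  rw [vertsOf_setOf_mem_edges hw] at hp
  convert hw.ncard_neighborSet_toSubgraph_eq_two hp using 2
  ext q
  rw [Subgraph.mem_neighborSet, ← Subgraph.mem_edgeSet, Walk.mem_edges_toSubgraph]
  rfl

theorem mem_of_neighbors_subset {p x y : ℤ × ℤ} (h : IsSAP L S) (hp : p ∈ vertsOf S)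
    (hsub : {q | s(p, q) ∈ S} ⊆ {x, y}) : s(p, x) ∈ S ∧ s(p, y) ∈ S := by
  have hle : ({x, y} : Set (ℤ × ℤ)).ncard ≤ {q | s(p, q) ∈ S}.ncard := by
    rw [h.ncard_neighbors_eq_two hp]
    exact (Set.ncard_insert_le _ _).trans (by simp)
  have heq := Set.eq_of_subset_of_ncard_le hsub hle
  have hx : x ∈ {q | s(p, q) ∈ S} := heq ▸ Set.mem_insert x {y}
  have hy : y ∈ {q | s(p, q) ∈ S} := heq ▸ Set.mem_insert_of_mem x rfl
  exact ⟨hx, hy⟩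

theorem translate (h : IsSAP L S) {t : ℤ × ℤ} (ht : Even (t.1 + t.2)) :
    IsSAP L (translateEdges t S) := by
  obtain ⟨v, w, hw, rfl, rfl⟩ := h
  refine ⟨v + t, w.map (HexLattice.translateHom t ht),
    (Walk.isCycle_map_iff_of_injective (add_left_injective t)).2 hw, w.length_map _, ?_⟩
  ext e
  simp [translateEdges, Walk.edges_map, HexLattice.translateHom]

theorem exists_isLeast (h : IsSAP L S) : ∃ c, IsLeast (lexVerts S) (toLex c) := by
  obtain ⟨x, hx, hmin⟩ := Set.exists_min_image _ id h.finite_lexVerts h.nonempty_lexVerts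
  exact ⟨ofLex x, hx, hmin⟩

theorem exists_isGreatest (h : IsSAP L S) : ∃ a, IsGreatest (lexVerts S) (toLex a) := by
  obtain ⟨x, hx, hmax⟩ := Set.exists_max_image _ id h.finite_lexVerts h.nonempty_lexVerts
  exact ⟨ofLex x, hx, hmax⟩

theorem mem_of_isLeast {c : ℤ × ℤ} (h : IsSAP L S) (hc : IsLeast (lexVerts S) (toLex c)) :
    s(c, c + (0, 1)) ∈ S ∧ s(c, c + (1, 0)) ∈ S := by
  refine h.mem_of_neighbors_subset (toLex.injective.mem_set_image.1 hc.1) fun q hq => ?_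
  have hadj := HexLattice.adj_iff.1 (h.subset_edgeSet hq)
  have hle := Prod.Lex.toLex_le_toLex'.1 (hc.2 ⟨q, ⟨_, hq, Sym2.mem_mk_right _ _⟩, rfl⟩)
  simp only [Int.even_iff] at hadj
  simp only [Set.mem_insert_iff, Set.mem_singleton_iff, Prod.ext_iff, Prod.fst_add, Prod.snd_add]
  omega

theorem mem_of_isGreatest {a : ℤ × ℤ} (h : IsSAP L S) (ha : IsGreatest (lexVerts S) (toLex a)) :
    s(a - (0, 1), a) ∈ S := by
  rw [Sym2.eq_swap]
  refine (h.mem_of_neighbors_subset (y := a - (1, 0)) (toLex.injective.mem_set_image.1 ha.1)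
    fun q hq => ?_).1
  have hadj := HexLattice.adj_iff.1 (h.subset_edgeSet hq)
  have hle := Prod.Lex.toLex_le_toLex'.1 (ha.2 ⟨q, ⟨_, hq, Sym2.mem_mk_right _ _⟩, rfl⟩)
  simp only [Int.even_iff] at hadj
  simp only [Set.mem_insert_iff, Set.mem_singleton_iff, Prod.ext_iff, Prod.fst_sub, Prod.snd_sub]
  omega

theorem even_of_translate {L' : ℕ} {t : ℤ × ℤ} (h : IsSAP L S)
    (h' : IsSAP L' (translateEdges t S)) : Even (t.1 + t.2) := by
  obtain ⟨c, hc⟩ := h.exists_isLeast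
  have he := (h.mem_of_isLeast hc).1
  have he' : s(c + t, c + t + (0, 1)) ∈ translateEdges t S := ⟨_, he, by simp [add_right_comm]⟩
  have hpar := HexLattice.even_of_adj_vertical (h.subset_edgeSet he)
  have hpar' := HexLattice.even_of_adj_vertical (h'.subset_edgeSet he')
  simp only [Int.even_iff, Prod.fst_add, Prod.snd_add] at hpar hpar' ⊢
  omega

theorem exists_translate_isLeast (h : IsSAP L S) {c : ℤ × ℤ} (hc : Even (c.1 + c.2)) :
    ∃ t, IsSAP L (translateEdges t S) ∧ IsLeast (lexVerts (translateEdges t S)) (toLex c) := by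
  obtain ⟨b, hb⟩ := h.exists_isLeast
  have hb' := HexLattice.even_of_adj_vertical (h.subset_edgeSet (h.mem_of_isLeast hb).1)
  refine ⟨c - b, h.translate ?_, by simpa using isLeast_lexVerts_translateEdges hb (c - b)⟩
  simp only [Int.even_iff, Prod.fst_sub, Prod.snd_sub] at hb' hc ⊢
  omega

theorem exists_translate_isGreatest (h : IsSAP L S) {c : ℤ × ℤ} (hc : Even (c.1 + c.2)) :
    ∃ t, IsSAP L (translateEdges t S) ∧
      IsGreatest (lexVerts (translateEdges t S)) (toLex (c + (0, 1))) := by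
  obtain ⟨a, ha⟩ := h.exists_isGreatest
  have ha' := HexLattice.even_of_adj_vertical (c := a - (0, 1))
    (by simpa using h.subset_edgeSet (h.mem_of_isGreatest ha))
  refine ⟨c + (0, 1) - a, h.translate ?_,
    add_sub_cancel a (c + (0, 1)) ▸ isGreatest_lexVerts_translateEdges ha _⟩
  simp only [Int.even_iff, Prod.fst_sub, Prod.snd_sub] at ha' hc ⊢
  simp at ha' ⊢
  omega

theorem natAbs_sub_add_natAbs_sub_le {p q : ℤ × ℤ} (h : IsSAP L S) (hp : p ∈ vertsOf S)
    (hq : q ∈ vertsOf S) : (p.1 - q.1).natAbs + (p.2 - q.2).natAbs ≤ 2 * L := by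
  obtain ⟨v, w, hw, rfl, rfl⟩ := h
  rw [vertsOf_setOf_mem_edges hw] at hp hq
  have hp' := HexLattice.natAbs_sub_add_natAbs_sub_le_length (w.takeUntil p hp)
  have hq' := HexLattice.natAbs_sub_add_natAbs_sub_le_length (w.takeUntil q hq)
  have := w.length_takeUntil_le_length hp
  have := w.length_takeUntil_le_length hq
  omega

end IsSAP

theorem eq_or_eq_of_toLex_le_of_le {c p : ℤ × ℤ} (h₁ : toLex c ≤ toLex p)
    (h₂ : toLex p ≤ toLex (c + (0, 1))) : p = c ∨ p = c + (0, 1) := by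
  simp only [Prod.Lex.toLex_le_toLex', Prod.fst_add, Prod.snd_add] at h₁ h₂
  simp only [Prod.ext_iff, Prod.fst_add, Prod.snd_add]
  simp at h₂ ⊢
  omega

theorem eq_of_forall_mem_toLex_le_of_le {c : ℤ × ℤ} {x : Sym2 (ℤ × ℤ)}
    (hx : x ∈ HexLattice.edgeSet)
    (hlex : ∀ p ∈ x, toLex c ≤ toLex p ∧ toLex p ≤ toLex (c + (0, 1))) :
    x = s(c, c + (0, 1)) := by
  induction x with | h a b =>
  have hab : a ≠ b := HexLattice.ne_of_adj hx
  obtain ⟨ha₁, ha₂⟩ := hlex a (Sym2.mem_mk_left a b)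
  obtain ⟨hb₁, hb₂⟩ := hlex b (Sym2.mem_mk_right a b)
  rcases eq_or_eq_of_toLex_le_of_le ha₁ ha₂ with rfl | rfl <;>
    rcases eq_or_eq_of_toLex_le_of_le hb₁ hb₂ with rfl | rfl
  · exact absurd rfl hab
  · rfl
  · exact Sym2.eq_swap
  · exact absurd rfl hab

def glueEdges (c : ℤ × ℤ) (A B : Set (Sym2 (ℤ × ℤ))) : Set (Sym2 (ℤ × ℤ)) :=
  (A ∪ B) \ {s(c, c + (0, 1))}

theorem translateEdges_glueEdges (t c : ℤ × ℤ) (A B : Set (Sym2 (ℤ × ℤ))) :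
    translateEdges t (glueEdges c A B) =
      glueEdges (c + t) (translateEdges t A) (translateEdges t B) := by
  rw [glueEdges, glueEdges, translateEdges,
    Set.image_sdiff (Sym2.map.injective (add_left_injective t)), Set.image_union,
    Set.image_singleton, Sym2.map_mk, add_right_comm]
  rfl

/-- `c + (0, 1)` is the top vertex of the rightmost column of `A`, and `c` the bottom vertex of the
leftmost column of `B`. -/
structure IsGluing (L M : ℕ) (c : ℤ × ℤ) (A B : Set (Sym2 (ℤ × ℤ))) : Prop where
  isSAP_left : IsSAP L A
  isSAP_right : IsSAP M B
  isGreatest_left : IsGreatest (lexVerts A) (toLex (c + (0, 1)))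
  isLeast_right : IsLeast (lexVerts B) (toLex c)

namespace IsGluing

variable {L M : ℕ} {c c' : ℤ × ℤ} {A B A' B' : Set (Sym2 (ℤ × ℤ))}

theorem le_of_mem_left (h : IsGluing L M c A B) {x : Sym2 (ℤ × ℤ)} (hx : x ∈ A) {p : ℤ × ℤ}
    (hp : p ∈ x) : toLex p ≤ toLex (c + (0, 1)) :=
  h.isGreatest_left.2 ⟨p, ⟨x, hx, hp⟩, rfl⟩

theorem le_of_mem_right (h : IsGluing L M c A B) {x : Sym2 (ℤ × ℤ)} (hx : x ∈ B) {p : ℤ × ℤ}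
    (hp : p ∈ x) : toLex c ≤ toLex p :=
  h.isLeast_right.2 ⟨p, ⟨x, hx, hp⟩, rfl⟩

theorem mem_left (h : IsGluing L M c A B) : s(c, c + (0, 1)) ∈ A := by
  simpa using h.isSAP_left.mem_of_isGreatest h.isGreatest_left

theorem mem_right (h : IsGluing L M c A B) : s(c, c + (0, 1)) ∈ B :=
  (h.isSAP_right.mem_of_isLeast h.isLeast_right).1

theorem isSAP (h : IsGluing L M c A B) : IsSAP (L + M - 2) (glueEdges c A B) := by
  obtain ⟨v₁, w₁, hw₁, rfl, rfl⟩ := h.isSAP_left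
  obtain ⟨v₂, w₂, hw₂, rfl, rfl⟩ := h.isSAP_right
  obtain ⟨W, hW, hlen, hedges⟩ := hw₁.exists_merge hw₂ h.mem_left
    h.mem_right fun y hy₁ hy₂ => by
      have hyA : y ∈ vertsOf {e | e ∈ w₁.edges} := by rwa [vertsOf_setOf_mem_edges hw₁]
      have hyB : y ∈ vertsOf {e | e ∈ w₂.edges} := by rwa [vertsOf_setOf_mem_edges hw₂]
      exact eq_or_eq_of_toLex_le_of_le (h.isLeast_right.2 ⟨y, hyB, rfl⟩)
        (h.isGreatest_left.2 ⟨y, hyA, rfl⟩)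
  refine ⟨c, W, hW, by omega, ?_⟩
  ext e
  simp [glueEdges, hedges]

theorem translate (h : IsGluing L M c A B) {t : ℤ × ℤ} (ht : Even (t.1 + t.2)) :
    IsGluing L M (c + t) (translateEdges t A) (translateEdges t B) where
  isSAP_left := h.isSAP_left.translate ht
  isSAP_right := h.isSAP_right.translate ht
  isGreatest_left :=
    add_right_comm c (0, 1) t ▸ isGreatest_lexVerts_translateEdges h.isGreatest_left t
  isLeast_right := isLeast_lexVerts_translateEdges h.isLeast_right t

theorem diff_subset_left (h : IsGluing L M c A B) (h' : IsGluing L M c' A' B')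
    (hR : glueEdges c A B = glueEdges c' A' B') (hc : toLex c ≤ toLex c') :
    A \ {s(c, c + (0, 1))} ⊆ A' := by
  intro x hx
  have hxR : x ∈ glueEdges c' A' B' := hR ▸ ⟨Or.inl hx.1, hx.2⟩
  refine hxR.1.resolve_right fun hxB' => hx.2 ?_
  exact eq_of_forall_mem_toLex_le_of_le (h.isSAP_left.subset_edgeSet hx.1) fun p hp =>
    ⟨hc.trans (h'.le_of_mem_right hxB' hp), h.le_of_mem_left hx.1 hp⟩

theorem diff_subset_right (h : IsGluing L M c A B) (h' : IsGluing L M c' A' B')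
    (hR : glueEdges c A B = glueEdges c' A' B') (hc : toLex c' ≤ toLex c) :
    B \ {s(c, c + (0, 1))} ⊆ B' := by
  intro x hx
  have hxR : x ∈ glueEdges c' A' B' := hR ▸ ⟨Or.inr hx.1, hx.2⟩
  refine hxR.1.resolve_left fun hxA' => hx.2 ?_
  exact eq_of_forall_mem_toLex_le_of_le (h.isSAP_right.subset_edgeSet hx.1) fun p hp =>
    ⟨h.le_of_mem_right hx.1 hp,
      (h'.le_of_mem_left hxA' hp).trans (add_le_add hc le_rfl)⟩

/-- Otherwise `A'` would contain all edges of `A` but the glued one, plus the glued edge of `A'` and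
the horizontal edge from `c` to `c + (1, 0)` of `B`: `L + 1` edges in all. -/
theorem toLex_le_of_glueEdges_eq (h : IsGluing L M c A B) (h' : IsGluing L M c' A' B')
    (hR : glueEdges c A B = glueEdges c' A' B') : toLex c' ≤ toLex c := by
  by_contra! hlt
  have hfB := (h.isSAP_right.mem_of_isLeast h.isLeast_right).2
  have hfR : s(c, c + (1, 0)) ∈ glueEdges c A B :=
    ⟨Or.inr hfB, by simp [Prod.ext_iff]⟩
  have hfA : s(c, c + (1, 0)) ∉ A := fun hf => by
    simpa [Prod.Lex.toLex_le_toLex'] using h.le_of_mem_left hf (Sym2.mem_mk_right _ _)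
  have hfA' : s(c, c + (1, 0)) ∈ A' := (hR ▸ hfR).1.resolve_right fun hf =>
    (h'.le_of_mem_right hf (Sym2.mem_mk_left _ _)).not_gt hlt
  have he'R : s(c', c' + (0, 1)) ∉ glueEdges c A B := hR ▸ fun he => he.2 rfl
  have hAR : A \ {s(c, c + (0, 1))} ⊆ glueEdges c A B := fun x hx => ⟨Or.inl hx.1, hx.2⟩
  have hsub :
      insert s(c', c' + (0, 1)) (insert s(c, c + (1, 0)) (A \ {s(c, c + (0, 1))})) ⊆ A' :=
    Set.insert_subset h'.mem_left (Set.insert_subset hfA' (h.diff_subset_left h' hR hlt.le))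
  have hcard := Set.ncard_le_ncard hsub h'.isSAP_left.finite
  have hfin := h.isSAP_left.finite.sdiff (t := {s(c, c + (0, 1))})
  rw [Set.ncard_insert_of_notMem _ (hfin.insert _),
    Set.ncard_insert_of_notMem (fun hf => hfA hf.1) hfin, h'.isSAP_left.ncard_eq] at hcard
  · have := Set.ncard_sdiff_singleton_add_one h.mem_left h.isSAP_left.finite
    rw [h.isSAP_left.ncard_eq] at this
    omega
  · rintro (he | he)
    · exact he'R (he ▸ hfR)
    · exact he'R (hAR he)

theorem eq_of_glueEdges_eq (h : IsGluing L M c A B) (h' : IsGluing L M c' A' B')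
    (hR : glueEdges c A B = glueEdges c' A' B') : A = A' ∧ B = B' := by
  obtain rfl : c = c' := toLex.injective
    ((h'.toLex_le_of_glueEdges_eq h hR.symm).antisymm (h.toLex_le_of_glueEdges_eq h' hR))
  have subset_of_diff {X Y : Set (Sym2 (ℤ × ℤ))} (hY : s(c, c + (0, 1)) ∈ Y)
      (hXY : X \ {s(c, c + (0, 1))} ⊆ Y) : X ⊆ Y :=
    Set.insert_eq_of_mem hY ▸ Set.sdiff_singleton_subset_iff.1 hXY
  exact ⟨(subset_of_diff h'.mem_left (h.diff_subset_left h' hR le_rfl)).antisymm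
      (subset_of_diff h.mem_left (h'.diff_subset_left h hR.symm le_rfl)),
    (subset_of_diff h'.mem_right (h.diff_subset_right h' hR le_rfl)).antisymm
      (subset_of_diff h.mem_right (h'.diff_subset_right h hR.symm le_rfl))⟩

end IsGluing

abbrev SAPClass (L : ℕ) : Type :=
  Quot (fun S S' : {S // IsSAP L S} => ∃ t : ℤ × ℤ, translateEdges t S.1 = S'.1)

namespace SAPClass

variable {L : ℕ}

theorem exists_translateEdges_eq_of_mk_eq {S S' : {S // IsSAP L S}}
    (h : (Quot.mk _ S : SAPClass L) = Quot.mk _ S') : ∃ t, translateEdges t S.1 = S'.1 := by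
  refine (Equivalence.eqvGen_iff ⟨fun _ => ⟨0, translateEdges_zero _⟩, ?_, ?_⟩).1
    (Quot.eqvGen_exact h)
  · rintro _ _ ⟨t, ht⟩
    exact ⟨-t, by rw [← ht, translateEdges_translateEdges, add_neg_cancel, translateEdges_zero]⟩
  · rintro _ _ _ ⟨s, hs⟩ ⟨t, ht⟩
    exact ⟨s + t, by rw [← translateEdges_translateEdges, hs, ht]⟩

theorem mk_eq_mk_of_translateEdges_eq {S S' : {S // IsSAP L S}} {s s' : ℤ × ℤ}
    (h : translateEdges s S.1 = translateEdges s' S'.1) :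
    (Quot.mk _ S : SAPClass L) = Quot.mk _ S' :=
  Quot.sound ⟨s - s', by rw [sub_eq_add_neg, ← translateEdges_translateEdges, h,
    translateEdges_translateEdges, add_neg_cancel, translateEdges_zero]⟩

/-- Every class has a representative with top right vertex `(0, 1)`, whose vertices then lie in a
box of side `4 L + 1`. -/
theorem finite (L : ℕ) : Finite (SAPClass L) := by
  set box : Set (ℤ × ℤ) := Set.Icc (-(2 * L : ℤ)) (2 * L) ×ˢ Set.Icc (1 - 2 * L : ℤ) (1 + 2 * L)
  have hbox : {S | S ⊆ box.sym2}.Finite := by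
    refine Set.Finite.finite_subsets ?_
    rw [Set.sym2_eq_mk_image]
    exact ((Set.finite_Icc _ _ |>.prod (Set.finite_Icc _ _)).prod
      (Set.finite_Icc _ _ |>.prod (Set.finite_Icc _ _))).image _
  have : Finite {S | S ⊆ box.sym2 ∧ IsSAP L S} := (hbox.subset fun S hS => hS.1).to_subtype
  refine Finite.of_surjective
    (fun S : {S | S ⊆ box.sym2 ∧ IsSAP L S} => (Quot.mk _ ⟨S.1, S.2.2⟩ : SAPClass L)) ?_
  rintro ⟨S, hS⟩
  obtain ⟨t, hSt, htop⟩ := hS.exists_translate_isGreatest (c := 0) (by simp)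
  refine ⟨⟨translateEdges t S, fun e he => Set.mem_sym2_iff_subset.2 fun p hp => ?_, hSt⟩,
    mk_eq_mk_of_translateEdges_eq (s := 0) (s' := t) (translateEdges_zero _)⟩
  have := hSt.natAbs_sub_add_natAbs_sub_le ⟨e, he, hp⟩ (toLex.injective.mem_set_image.1 htop.1)
  simp only [box, Set.mem_prod, Set.mem_Icc]
  simp at this
  omega

end SAPClass

theorem exists_injective_glue (L M : ℕ) :
    ∃ f : SAPClass L × SAPClass M → SAPClass (L + M - 2), Function.Injective f := by
  have hglue (q : SAPClass L × SAPClass M) :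
      ∃ s t, IsGluing L M 0 (translateEdges s q.1.out.1) (translateEdges t q.2.out.1) := by
    obtain ⟨s, hs, hsA⟩ := q.1.out.2.exists_translate_isGreatest (c := 0) (by simp)
    obtain ⟨t, ht, htB⟩ := q.2.out.2.exists_translate_isLeast (c := 0) (by simp)
    exact ⟨s, t, hs, ht, hsA, htB⟩
  choose s t hst using hglue
  refine ⟨fun q => Quot.mk _ ⟨_, (hst q).isSAP⟩, fun q q' hqq' => ?_⟩
  obtain ⟨u, hu⟩ := SAPClass.exists_translateEdges_eq_of_mk_eq hqq'
  change translateEdges u (glueEdges _ _ _) = glueEdges _ _ _ at hu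
  have hu_even := (hst q).isSAP.even_of_translate (by rw [hu]; exact (hst q').isSAP)
  rw [translateEdges_glueEdges] at hu
  obtain ⟨hA, hB⟩ := ((hst q).translate hu_even).eq_of_glueEdges_eq (hst q') hu
  rw [translateEdges_translateEdges] at hA hB
  have h₁ := SAPClass.mk_eq_mk_of_translateEdges_eq hA
  have h₂ := SAPClass.mk_eq_mk_of_translateEdges_eq hB
  rw [Quot.out_eq, Quot.out_eq] at h₁ h₂
  exact Prod.ext h₁ h₂

/-- Supermultiplicativity of hexagonal-lattice self-avoiding polygons:
`p_{L+M-2} ≥ p_L · p_M`. -/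
theorem hexSAP_supermultiplicative (L M : ℕ) :
    hexSAPCount L * hexSAPCount M ≤ hexSAPCount (L + M - 2) := by
  obtain ⟨f, hf⟩ := exists_injective_glue L M
  have := SAPClass.finite (L + M - 2)
  rw [hexSAPCount, hexSAPCount, hexSAPCount, ← Nat.card_prod]
  exact Nat.card_le_card_of_injective f hf
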